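/- arXiv:2011.09172 — 9 statements merged into one kernel-verified Lean document; each statement's English description precedes it below -/
import Mathlib

section
/- For every γ > 0, there exists a unique v́ ∈ (0, 1/2) such that φ^γ(v́) = 1, where φ^γ(v) = (1-v)^γ - γ(1-v)^{γ-1} v log v. -/
/-! `φ(0) = 1` and `φ'(v) = -γ (1 - v) ^ (γ - 2) ψ(v)` with
`ψ(v) = (1 - v) (2 + log v) - (γ - 1) v log v`. Since `ψ'(v) = 1/v - γ log v - (γ + 2)` is strictly
decreasing, `ψ` is strictly concave on `(0, ∞)`; as `ψ(1) = 0`, a zero `ξ < 1` of `ψ` forces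
`ψ < 0` on `(0, ξ)`, so `φ` is strictly increasing on `[0, ξ]` and `φ > 1` on `(0, ξ]`.
Two solutions `x < y` of `φ = 1` would give such a `ξ ∈ (x, y)` by Rolle, whence `φ(x) > 1`.
For existence, `ψ → -∞` at `0⁺` makes `φ > 1` near `0`, while
`φ(1/2) = (1 + γ log 2) / 2 ^ γ < 1`. -/

open Real Set Filter Topology

noncomputable def phiF (γ v : ℝ) : ℝ :=
  (1 - v) ^ γ - γ * (1 - v) ^ (γ - 1) * v * log v

noncomputable def psiF (γ v : ℝ) : ℝ :=
  (1 - v) * (2 + log v) - (γ - 1) * (v * log v)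

theorem StrictConcaveOn.lt_of_lt_of_le_right {s : Set ℝ} {f : ℝ → ℝ}
    (hf : StrictConcaveOn ℝ s f) {x y z : ℝ} (hx : x ∈ s) (hz : z ∈ s)
    (hxy : x < y) (hyz : y < z) (hfyz : f y ≤ f z) : f x < f y := by
  have hmin := hf.lt_on_openSegment hx hz (hxy.trans hyz).ne
    (by rw [openSegment_eq_Ioo (hxy.trans hyz)]; exact ⟨hxy, hyz⟩)
  exact (min_lt_iff.1 hmin).resolve_right hfyz.not_gt

theorem hasDerivAt_psiF (γ : ℝ) {v : ℝ} (hv : 0 < v) :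
    HasDerivAt (psiF γ) (v⁻¹ - γ * log v - (γ + 2)) v := by
  refine ((((hasDerivAt_id v).const_sub 1).mul ((hasDerivAt_log hv.ne').const_add 2)).sub
    ((hasDerivAt_mul_log hv.ne').const_mul (γ - 1))).congr_deriv ?_
  simp only [id]
  field_simp
  ring

theorem psiF_one (γ : ℝ) : psiF γ 1 = 0 := by
  simp [psiF]

theorem strictConcaveOn_psiF {γ : ℝ} (hγ : 0 ≤ γ) :
    StrictConcaveOn ℝ (Ioi 0) (psiF γ) := by
  refine StrictAntiOn.strictConcaveOn_of_deriv (convex_Ioi 0)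
    (fun v hv => (hasDerivAt_psiF γ hv).continuousAt.continuousWithinAt) ?_
  rw [interior_Ioi]
  intro v hv w hw hvw
  rw [(hasDerivAt_psiF γ hv).deriv, (hasDerivAt_psiF γ hw).deriv]
  have hinv : w⁻¹ < v⁻¹ := inv_strictAnti₀ hv hvw
  have hlog : γ * log v ≤ γ * log w := mul_le_mul_of_nonneg_left (log_le_log hv hvw.le) hγ
  linarith

theorem psiF_neg_of_lt {γ ξ v : ℝ} (hγ : 0 ≤ γ) (hξ : ξ < 1) (hψξ : psiF γ ξ ≤ 0)
    (hv : 0 < v) (hvξ : v < ξ) : psiF γ v < 0 :=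
  ((strictConcaveOn_psiF hγ).lt_of_lt_of_le_right hv (mem_Ioi.2 one_pos) hvξ hξ
    (hψξ.trans_eq (psiF_one γ).symm)).trans_le hψξ

theorem eventually_psiF_neg (γ : ℝ) : ∀ᶠ v in 𝓝[>] 0, psiF γ v < 0 := by
  have h1 : Tendsto (fun v : ℝ => 1 - v) (𝓝[>] 0) (𝓝 1) :=
    tendsto_nhdsWithin_of_tendsto_nhds (by simpa using (continuous_sub_left (1 : ℝ)).tendsto 0)
  have h2 : Tendsto (fun v => 2 + log v) (𝓝[>] 0) atBot :=
    tendsto_atBot_add_const_left _ 2 tendsto_log_nhdsGT_zero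
  have h3 : Tendsto (fun v => -((γ - 1) * (v * log v))) (𝓝[>] 0) (𝓝 0) :=
    tendsto_nhdsWithin_of_tendsto_nhds
      (by simpa using ((continuous_mul_log.const_mul (γ - 1)).tendsto 0).neg)
  simpa only [psiF, sub_eq_add_neg] using
    ((h1.pos_mul_atBot one_pos h2).atBot_add h3).eventually (eventually_lt_atBot 0)

theorem phiF_eq (γ : ℝ) :
    phiF γ = fun v => (1 - v) ^ γ - γ * ((1 - v) ^ (γ - 1) * (v * log v)) := by
  funext v
  simp only [phiF, mul_assoc]

theorem hasDerivAt_phiF (γ : ℝ) {v : ℝ} (hv₀ : 0 < v) (hv₁ : v < 1) :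
    HasDerivAt (phiF γ) (-γ * (1 - v) ^ (γ - 2) * psiF γ v) v := by
  have hpos : 0 < 1 - v := by linarith
  have hbase : HasDerivAt (fun v : ℝ => 1 - v) (-1) v := (hasDerivAt_id v).const_sub 1
  have hpow (p : ℝ) : HasDerivAt (fun v : ℝ => (1 - v) ^ p) (-1 * p * (1 - v) ^ (p - 1)) v :=
    hbase.rpow_const (Or.inl hpos.ne')
  rw [phiF_eq]
  refine ((hpow γ).sub (((hpow (γ - 1)).mul (hasDerivAt_mul_log hv₀.ne')).const_mul γ)).congr_deriv
    ?_
  have h₁ : (1 - v) ^ (γ - 1) = (1 - v) ^ (γ - 2) * (1 - v) := by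
    rw [← rpow_add_one hpos.ne']; ring_nf
  rw [show γ - 1 - 1 = γ - 2 by ring, h₁, psiF]
  ring

theorem continuousOn_phiF (γ : ℝ) : ContinuousOn (phiF γ) (Iio 1) := by
  have hpow (p : ℝ) : ContinuousOn (fun v : ℝ => (1 - v) ^ p) (Iio 1) := fun v hv =>
    ((continuous_sub_left 1).continuousAt.rpow_const
      (Or.inl (sub_ne_zero.2 (ne_of_gt hv)))).continuousWithinAt
  rw [phiF_eq]
  exact (hpow γ).sub
    (continuousOn_const.mul ((hpow (γ - 1)).mul continuous_mul_log.continuousOn))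

theorem phiF_zero (γ : ℝ) : phiF γ 0 = 1 := by
  simp [phiF]

theorem one_lt_phiF {γ t v : ℝ} (hγ : 0 < γ) (ht : t < 1)
    (hψ : ∀ u ∈ Ioo 0 t, psiF γ u < 0) (hv : v ∈ Ioc 0 t) : 1 < phiF γ v := by
  have hmono : StrictMonoOn (phiF γ) (Icc 0 t) := by
    refine strictMonoOn_of_deriv_pos (convex_Icc 0 t)
      ((continuousOn_phiF γ).mono fun u hu => hu.2.trans_lt ht) ?_
    rw [interior_Icc]
    intro u hu
    rw [(hasDerivAt_phiF γ hu.1 (hu.2.trans ht)).deriv]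
    have hpow : 0 < (1 - u) ^ (γ - 2) := rpow_pos_of_pos (by linarith [hu.2]) _
    calc 0 < γ * (1 - u) ^ (γ - 2) * -psiF γ u :=
          mul_pos (mul_pos hγ hpow) (neg_pos.2 (hψ u hu))
      _ = _ := by ring
  rw [← phiF_zero γ]
  exact hmono ⟨le_rfl, hv.1.le.trans hv.2⟩ (Ioc_subset_Icc_self hv) hv.1

theorem eventually_one_lt_phiF {γ : ℝ} (hγ : 0 < γ) : ∀ᶠ v in 𝓝[>] 0, 1 < phiF γ v := by
  obtain ⟨δ, hδ, hψ⟩ := mem_nhdsGT_iff_exists_Ioo_subset.1 (eventually_psiF_neg γ)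
  filter_upwards [Ioo_mem_nhdsGT (lt_min hδ one_pos)] with v hv
  exact one_lt_phiF hγ (hv.2.trans_le (min_le_right _ _))
    (fun u hu => hψ ⟨hu.1, hu.2.trans (hv.2.trans_le (min_le_left _ _))⟩) ⟨hv.1, le_rfl⟩

theorem one_lt_phiF_of_phiF_eq {γ x y : ℝ} (hγ : 0 < γ) (hx : 0 < x) (hxy : x < y)
    (hy : y < 1) (hφ : phiF γ x = phiF γ y) : 1 < phiF γ x := by
  obtain ⟨ξ, hξ, hφ'ξ⟩ := exists_hasDerivAt_eq_zero hxy
    ((continuousOn_phiF γ).mono fun u hu => hu.2.trans_lt hy) hφ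
    fun u hu => hasDerivAt_phiF γ (hx.trans hu.1) (hu.2.trans hy)
  have hψξ : psiF γ ξ = 0 := by
    have : 0 < (1 - ξ) ^ (γ - 2) := rpow_pos_of_pos (by linarith [hξ.2]) _
    simpa [hγ.ne', this.ne'] using hφ'ξ
  exact one_lt_phiF hγ (hξ.2.trans hy)
    (fun u hu => psiF_neg_of_lt hγ.le (hξ.2.trans hy) hψξ.le hu.1 hu.2) ⟨hx, hξ.1.le⟩

theorem phiF_half_lt_one {γ : ℝ} (hγ : 0 < γ) : phiF γ (1 / 2) < 1 := by
  have ht : 0 < γ * log 2 := mul_pos hγ (log_pos one_lt_two)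
  have hφ : phiF γ (1 / 2) = (1 + γ * log 2) * exp (-(γ * log 2)) := by
    rw [phiF, show (1 : ℝ) - 1 / 2 = 1 / 2 by norm_num, rpow_sub_one (by norm_num),
      rpow_def_of_pos (by norm_num), one_div, log_inv]
    field_simp
    ring
  rw [hφ, exp_neg, ← div_eq_mul_inv, div_lt_one (exp_pos _)]
  linarith [add_one_lt_exp ht.ne']

theorem eq_of_phiF_eq_one {γ x y : ℝ} (hγ : 0 < γ) (hx : x ∈ Ioo 0 1) (hy : y ∈ Ioo 0 1)
    (hφx : phiF γ x = 1) (hφy : phiF γ y = 1) : x = y := by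
  rcases lt_trichotomy x y with hxy | hxy | hyx
  · exact absurd hφx (one_lt_phiF_of_phiF_eq hγ hx.1 hxy hy.2 (hφx.trans hφy.symm)).ne'
  · exact hxy
  · exact absurd hφy (one_lt_phiF_of_phiF_eq hγ hy.1 hyx hx.2 (hφy.trans hφx.symm)).ne'

theorem exists_phiF_eq_one {γ : ℝ} (hγ : 0 < γ) : ∃ v ∈ Ioo (0 : ℝ) (1 / 2), phiF γ v = 1 := by
  obtain ⟨t, hφt, ht⟩ :=
    ((eventually_one_lt_phiF hγ).and (Ioo_mem_nhdsGT (by norm_num : (0 : ℝ) < 1 / 2))).exists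
  obtain ⟨v, hv, hφv⟩ := intermediate_value_Ioo' ht.2.le
    ((continuousOn_phiF γ).mono fun u hu => hu.2.trans_lt (by norm_num))
    ⟨phiF_half_lt_one hγ, hφt⟩
  exact ⟨v, ⟨ht.1.trans hv.1, hv.2⟩, hφv⟩

theorem phiFL_eq_one_unique (γ : ℝ) (hγ : 0 < γ) :
    ∃! v : ℝ, v ∈ Set.Ioo (0 : ℝ) (1/2) ∧
      (1 - v) ^ γ - γ * (1 - v) ^ (γ - 1) * v * Real.log v = 1 := by
  obtain ⟨r, hr, hφr⟩ := exists_phiF_eq_one hγ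
  have hsub : Ioo (0 : ℝ) (1 / 2) ⊆ Ioo 0 1 := Ioo_subset_Ioo_right (by norm_num)
  exact ⟨r, ⟨hr, hφr⟩, fun y ⟨hy, hφy⟩ => eq_of_phiF_eq_one hγ (hsub hy) (hsub hr) hφy hφr⟩
end

section
/- For every γ with 0 < γ < 1 and every v ∈ (0,1), one has (1-v)² + 2γ v(1-v) + γ v² log v > 0. -/
open Real

theorem phi2_pos (γ : ℝ) (hγ0 : 0 < γ) (hγ1 : γ < 1)
    (v : ℝ) (hv : v ∈ Set.Ioo (0 : ℝ) 1) :
    0 < (1 - v) ^ 2 + 2 * γ * v * (1 - v) + γ * v ^ 2 * Real.log v := by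
  obtain ⟨hv0, hv1⟩ := hv
  have hinv : Real.log v⁻¹ ≤ v⁻¹ - 1 := Real.log_le_sub_one_of_pos (by positivity)
  rw [Real.log_inv] at hinv
  have hlog : 1 - v⁻¹ ≤ Real.log v := by linarith
  have h1 : v ^ 2 - v ≤ v ^ 2 * Real.log v := by
    have := mul_le_mul_of_nonneg_left hlog (by positivity : (0:ℝ) ≤ v ^ 2)
    have hv0' : v ≠ 0 := ne_of_gt hv0
    calc v ^ 2 - v = v ^ 2 * (1 - v⁻¹) := by field_simp
      _ ≤ v ^ 2 * Real.log v := this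
  nlinarith [mul_nonneg hγ0.le (sub_nonneg.mpr h1),
    mul_pos (mul_pos hγ0 hv0) (sub_pos.mpr hv1), sq_nonneg (1 - v)]
end

section
/- For every γ > 0, the function h^γ(v) = v / ((1-v)^γ - γ(1-v)^{γ-1} v log v) is strictly increasing on (0,1): for u, v ∈ (0,1), h^γ(u) > h^γ(v) if and only if u > v. -/
/-!
`1 / h^γ(v) = φ^γ(v) / v = (1 - v)^γ * (1/v + γ * (-log v) / (1 - v))`, and `-log v / (1 - v)` is
the slope of `log` between `v` and `1`, which is antitone in `v` because `log` is concave. Hence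
`1/v + γ * slope` is positive and strictly decreasing on `(0, 1)`, and so is its product with the
positive, decreasing factor `(1 - v)^γ`; no derivative of `h^γ` is needed.
-/

open Real

/-- The function h^γ(v) = v / φ^γ(v). -/
noncomputable def hFL (γ v : ℝ) : ℝ :=
  v / ((1 - v) ^ γ - γ * (1 - v) ^ (γ - 1) * v * Real.log v)

open Set

theorem AntitoneOn.mul_strictAntiOn_of_pos_of_nonneg {α β : Type*} [Mul α] [Zero α]
    [Preorder α] [PosMulStrictMono α] [MulPosMono α] [Preorder β] {f g : β → α} {s : Set β}
    (hf : AntitoneOn f s) (hg : StrictAntiOn g s) (hf0 : ∀ x ∈ s, 0 < f x)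
    (hg0 : ∀ x ∈ s, 0 ≤ g x) : StrictAntiOn (fun x => f x * g x) s :=
  fun _ ha _ hb hab =>
    mul_lt_mul_of_le_of_lt_of_nonneg_of_pos (hf ha hb hab.le) (hg ha hb hab) (hg0 _ hb) (hf0 _ ha)

lemma antitoneOn_slope_log_one : AntitoneOn (fun v => slope log v 1) (Ioo 0 1) := by
  intro a ha b hb hab
  simp only [slope_comm log _ 1]
  exact strictConcaveOn_log_Ioi.concaveOn.slope_anti (mem_Ioi.2 one_pos)
    ⟨ha.1, ha.2.ne⟩ ⟨hb.1, hb.2.ne⟩ hab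

lemma slope_log_one_pos {v : ℝ} (hv : v ∈ Ioo 0 1) : 0 < slope log v 1 := by
  rw [slope_def_field, log_one]
  exact div_pos (by linarith [log_neg hv.1 hv.2]) (by linarith [hv.2])

noncomputable def hFLRecip (γ v : ℝ) : ℝ :=
  (1 - v) ^ γ * (v⁻¹ + γ * slope log v 1)

lemma hFL_eq_inv_hFLRecip {γ v : ℝ} (hv : v ∈ Ioo 0 1) : hFL γ v = (hFLRecip γ v)⁻¹ := by
  have hv0 : v ≠ 0 := hv.1.ne'
  have hv1 : 1 - v ≠ 0 := by linarith [hv.2]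
  rw [hFL, hFLRecip, slope_def_field, log_one, rpow_sub_one hv1, ← inv_div]
  congr 1
  field_simp
  ring

lemma inv_add_mul_slope_log_one_pos {γ v : ℝ} (hγ : 0 ≤ γ) (hv : v ∈ Ioo 0 1) :
    0 < v⁻¹ + γ * slope log v 1 :=
  add_pos_of_pos_of_nonneg (inv_pos.2 hv.1) (mul_nonneg hγ (slope_log_one_pos hv).le)

lemma hFLRecip_pos {γ v : ℝ} (hγ : 0 ≤ γ) (hv : v ∈ Ioo 0 1) : 0 < hFLRecip γ v :=
  mul_pos (rpow_pos_of_pos (sub_pos.2 hv.2) γ) (inv_add_mul_slope_log_one_pos hγ hv)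

lemma strictAntiOn_hFLRecip {γ : ℝ} (hγ : 0 ≤ γ) : StrictAntiOn (hFLRecip γ) (Ioo 0 1) := by
  have hpow : AntitoneOn (fun v : ℝ => (1 - v) ^ γ) (Ioo 0 1) := fun a _ b hb hab =>
    rpow_le_rpow (by linarith [hb.2]) (by linarith) hγ
  have hsum : StrictAntiOn (fun v => v⁻¹ + γ * slope log v 1) (Ioo 0 1) :=
    (inv_strictAntiOn.mono Ioo_subset_Ioi_self).add_antitone
      fun a ha b hb hab => mul_le_mul_of_nonneg_left (antitoneOn_slope_log_one ha hb hab) hγ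
  exact hpow.mul_strictAntiOn_of_pos_of_nonneg hsum
    (fun v hv => rpow_pos_of_pos (sub_pos.2 hv.2) γ)
    (fun v hv => (inv_add_mul_slope_log_one_pos hγ hv).le)

lemma strictMonoOn_hFL {γ : ℝ} (hγ : 0 ≤ γ) : StrictMonoOn (hFL γ) (Ioo 0 1) := by
  intro a ha b hb hab
  rw [hFL_eq_inv_hFLRecip ha, hFL_eq_inv_hFLRecip hb]
  exact inv_strictAnti₀ (hFLRecip_pos hγ hb) (strictAntiOn_hFLRecip hγ ha hb hab)

theorem hFL_strictMono (γ : ℝ) (hγ : 0 < γ)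
    (u v : ℝ) (hu : u ∈ Set.Ioo (0 : ℝ) 1) (hv : v ∈ Set.Ioo (0 : ℝ) 1) :
    hFL γ u > hFL γ v ↔ u > v :=
  (strictMonoOn_hFL hγ.le).lt_iff_lt hv hu
end

section
/- For every γ ≥ 1 and every q ∈ (1/2, 1): q^γ - γ(1-q) q^{γ-1} log(1-q) - (1-q)^γ + γ q (1-q)^{γ-1} log q > 0. -/
open Real

/-- The two bounds `log x < x - 1` (at `x = p / q`) and `1 - 1 / q ≤ log q` combine to
`q log q - p log p > (q - p) (p + q - 1) / q = 0`. -/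
theorem Real.mul_log_lt_mul_log_of_add_eq_one {p q : ℝ} (hp : 0 < p) (hpq : p < q)
    (hsum : p + q = 1) : p * log p < q * log q := by
  have hq : 0 < q := hp.trans hpq
  have hratio : log p - log q < p / q - 1 := by
    rw [← log_div hp.ne' hq.ne']
    exact log_lt_sub_one_of_pos (div_pos hp hq) (by rw [Ne, div_eq_one_iff_eq hq.ne']; exact hpq.ne)
  have hlog_q : 1 - q⁻¹ ≤ log q := one_sub_inv_le_log_of_pos hq
  have hzero : p * (1 - p / q) + (q - p) * (1 - q⁻¹) = 0 := by
    field_simp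
    linear_combination (q - p) * hsum
  nlinarith [mul_lt_mul_of_pos_left hratio hp, mul_le_mul_of_nonneg_left hlog_q (sub_nonneg.2 hpq.le)]

theorem binary_underconfidence_key_ineq_ge_one (γ : ℝ) (hγ : 1 ≤ γ)
    (q : ℝ) (hq : q ∈ Set.Ioo (1/2 : ℝ) 1) :
    0 < q ^ γ - γ * (1 - q) * q ^ (γ - 1) * Real.log (1 - q)
        - (1 - q) ^ γ + γ * q * (1 - q) ^ (γ - 1) * Real.log q := by
  obtain ⟨hq_half, hq_one⟩ := hq
  set p := 1 - q
  have hp : 0 < p := by linarith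
  have hpq : p < q := by linarith
  have hq0 : 0 < q := hp.trans hpq
  have hmul_log : p * log p < q * log q := mul_log_lt_mul_log_of_add_eq_one hp hpq (by ring)
  have hB : 0 < p - γ * q * log q := by
    nlinarith [mul_pos (mul_pos (by linarith : (0 : ℝ) < γ) hq0) (neg_pos.2 (log_neg hq0 hq_one))]
  have hBA : p - γ * q * log q < q - γ * p * log p := by nlinarith
  have hpow : p ^ (γ - 1) ≤ q ^ (γ - 1) := rpow_le_rpow hp.le hpq.le (by linarith)
  have hfactor : q ^ γ - γ * p * q ^ (γ - 1) * log p - p ^ γ + γ * q * p ^ (γ - 1) * log q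
      = q ^ (γ - 1) * (q - γ * p * log p) - p ^ (γ - 1) * (p - γ * q * log q) := by
    rw [rpow_sub_one hq0.ne', rpow_sub_one hp.ne']
    field_simp
    ring
  rw [hfactor, sub_pos]
  exact mul_lt_mul' hpow hBA hB.le (rpow_pos_of_pos hq0 _)
end

section
/- For every γ with 0 < γ < 1 and every q ∈ (1/2, 1): q^γ - (1-q)^γ - γ q + γ(1-q) > 0. -/
open Real

theorem rpow_diff_ineq_small_gamma (γ : ℝ) (hγ0 : 0 < γ) (hγ1 : γ < 1)
    (q : ℝ) (hq : q ∈ Set.Ioo (1/2 : ℝ) 1) :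
    0 < q ^ γ - (1 - q) ^ γ - γ * q + γ * (1 - q) := by
  obtain ⟨hq1, hq2⟩ := hq
  have ha0 : (0:ℝ) < 1 - q := by linarith
  have hab : 1 - q < q := by linarith
  -- Mean value theorem for x ↦ x ^ γ on [1-q, q]
  obtain ⟨c, hc, hderiv⟩ := exists_hasDerivAt_eq_slope (fun x => x ^ γ)
    (fun x => γ * x ^ (γ - 1)) hab
    (by
      apply ContinuousOn.rpow_const continuousOn_id
      intro x hx
      left
      rcases hx with ⟨h1, _⟩
      intro h; simp only [id] at h; rw [h] at h1; linarith)
    (by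
      intro x hx
      rcases hx with ⟨h1, _⟩
      have hx0 : x ≠ 0 := by intro h; rw [h] at h1; linarith
      simpa [mul_comm] using Real.hasDerivAt_rpow_const (p := γ) (Or.inl hx0))
  rcases hc with ⟨hc1, hc2⟩
  have hc0 : 0 < c := lt_trans ha0 hc1
  have hcl1 : c < 1 := by linarith
  have hcg : 1 < c ^ (γ - 1) := by
    rw [Real.one_lt_rpow_iff_of_pos hc0]
    right
    exact ⟨hcl1, by linarith⟩
  have hsub : (0:ℝ) < q - (1 - q) := by linarith
  have hslope : q ^ γ - (1 - q) ^ γ = γ * c ^ (γ - 1) * (q - (1 - q)) := by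
    field_simp at hderiv
    linarith [hderiv]
  have : γ * (q - (1 - q)) < γ * c ^ (γ - 1) * (q - (1 - q)) := by
    have h1 : γ < γ * c ^ (γ - 1) := by nlinarith
    nlinarith
  linarith [hslope]
end

section
/- For every q ∈ (1/2, 1): -(1-q) log(1-q)/q + q log q/(1-q) + q - (1-q) > 0. -/
/-!
With `p = 1 - q`, the expression equals `p q (H q - H p)` for
`H x = (-log (1 - x) - x - x ^ 2 / 2) / x ^ 2 = ∑_{n ≥ 0} x ^ (n + 1) / (n + 3)`.
A power series with positive coefficients is strictly increasing on `(0, 1)`, and `p < q`.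
-/

open Real

lemma hasSum_pow_div_add_three {x : ℝ} (hx : |x| < 1) :
    HasSum (fun n : ℕ => x ^ (n + 3) / (n + 3)) (-log (1 - x) - x - x ^ 2 / 2) := by
  have h := (hasSum_nat_add_iff' 2).2 (hasSum_pow_div_log_of_abs_lt_one hx)
  norm_num [Finset.sum_range_succ, add_assoc, sub_add_eq_sub_sub] at h ⊢
  exact h

lemma hasSum_pow_div_add_three_div_sq {x : ℝ} (hx : |x| < 1) (hx0 : x ≠ 0) :
    HasSum (fun n : ℕ => x ^ (n + 1) / (n + 3)) ((-log (1 - x) - x - x ^ 2 / 2) / x ^ 2) := by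
  refine ((hasSum_pow_div_add_three hx).div_const (x ^ 2)).congr_fun fun n => ?_
  rw [pow_add x n 3, pow_add x n 1]
  field_simp

lemma strictMonoOn_neg_log_one_sub_sub_sub_div_sq :
    StrictMonoOn (fun x : ℝ => (-log (1 - x) - x - x ^ 2 / 2) / x ^ 2) (Set.Ioo 0 1) := by
  intro p ⟨hp0, hp1⟩ q ⟨hq0, hq1⟩ hpq
  refine hasSum_lt (i := 0) (fun n => ?_) (by norm_num; linarith)
    (hasSum_pow_div_add_three_div_sq (abs_lt.2 ⟨by linarith, hp1⟩) hp0.ne')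
    (hasSum_pow_div_add_three_div_sq (abs_lt.2 ⟨by linarith, hq1⟩) hq0.ne')
  gcongr

theorem binary_underconfidence_gamma_zero_part (q : ℝ)
    (hq : q ∈ Set.Ioo (1/2 : ℝ) 1) :
    0 < -(1 - q) * Real.log (1 - q) / q + q * Real.log q / (1 - q)
        + q - (1 - q) := by
  obtain ⟨hq1, hq2⟩ := hq
  set H := fun x : ℝ => (-log (1 - x) - x - x ^ 2 / 2) / x ^ 2
  have hH : H (1 - q) < H q :=
    strictMonoOn_neg_log_one_sub_sub_sub_div_sq ⟨by linarith, by linarith⟩ ⟨by linarith, hq2⟩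
      (by linarith)
  have hp : 1 - q ≠ 0 := by linarith
  have hq0 : q ≠ 0 := by linarith
  have key : -(1 - q) * log (1 - q) / q + q * log q / (1 - q) + q - (1 - q)
      = (1 - q) * q * (H q - H (1 - q)) := by
    simp only [H, sub_sub_cancel]
    field_simp
    ring
  rw [key]
  exact mul_pos (mul_pos (by linarith) (by linarith)) (sub_pos.2 hH)
end

section
/- For every a ∈ [0, 1/2]: -(1-a) log(1+2a) - a log a ≥ 0, where the term a log a is taken to be 0 at a = 0. -/
/-!
Both sides of the inequality vanish at `a = 1/2`, so near `1/2` one needs bounds that are exact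
there: writing `φ(a) = (2a - 1) log 2 + a (-log 2a) + (1 - a) (-log ((1 + 2a)/2))` and using
`-log y ≥ 2(1 - y)/(1 + y)` for `y ∈ (0, 1]` (the first term of the series of
`log ((1 + x)/(1 - x))`) reduces the claim on `[1/8, 1/2]` to a polynomial inequality in `a` and
`log 2`. On `(0, 1/8]` the crude bounds `log (1 + 2a) ≤ 2a` and `log a ≤ -3 log 2 ≤ -2`
suffice.
-/

open Real

noncomputable def phi (a : ℝ) : ℝ := -(1 - a) * log (1 + 2 * a) - a * log a

theorem two_mul_le_log_one_add_sub_log_one_sub {x : ℝ} (hx₀ : 0 ≤ x) (hx₁ : x < 1) :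
    2 * x ≤ log (1 + x) - log (1 - x) := by
  have hsum := hasSum_log_sub_log_of_abs_lt_one (abs_lt.2 ⟨by linarith, hx₁⟩)
  simpa using le_hasSum hsum 0 fun k _ => by positivity

theorem two_mul_one_sub_div_one_add_le_neg_log {y : ℝ} (hy₀ : 0 < y) (hy₁ : y ≤ 1) :
    2 * (1 - y) / (1 + y) ≤ -log y := by
  set x := (1 - y) / (1 + y) with hx
  have hx₀ : 0 ≤ x := div_nonneg (by linarith) (by linarith)
  have hx₁ : x < 1 := (div_lt_one (by linarith)).2 (by linarith)
  have hratio : (1 + x) / (1 - x) = y⁻¹ := by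
    rw [hx]
    field_simp [hy₀.ne']
    ring
  have key := two_mul_le_log_one_add_sub_log_one_sub hx₀ hx₁
  rwa [← log_div (by linarith) (by linarith), hratio, log_inv, hx, ← mul_div_assoc] at key

theorem phi_nonneg_of_le_one_eighth {a : ℝ} (ha₀ : 0 < a) (ha : a ≤ 1 / 8) : 0 ≤ phi a := by
  have hlog_one_add : log (1 + 2 * a) ≤ 2 * a := by
    linarith [log_le_sub_one_of_pos (by positivity : 0 < 1 + 2 * a)]
  have hlog : log a ≤ -2 :=
    calc log a ≤ log (2 ^ 3)⁻¹ := log_le_log ha₀ (by norm_num [ha])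
      _ = -(3 * log 2) := by rw [log_inv, log_pow]; norm_num
      _ ≤ -2 := by linarith [log_two_gt_d9]
  unfold phi
  nlinarith [mul_le_mul_of_nonneg_left hlog_one_add (by linarith : 0 ≤ 1 - a),
    mul_le_mul_of_nonneg_left hlog ha₀.le]

theorem phi_nonneg_of_one_eighth_le {a : ℝ} (ha₀ : 1 / 8 ≤ a) (ha₁ : a ≤ 1 / 2) :
    0 ≤ phi a := by
  have hsplit : phi a =
      (2 * a - 1) * log 2 + a * -log (2 * a) + (1 - a) * -log ((1 + 2 * a) / 2) := by
    unfold phi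
    rw [log_mul two_ne_zero (by linarith), log_div (by linarith) two_ne_zero]
    ring
  have hpade₁ := two_mul_one_sub_div_one_add_le_neg_log (y := 2 * a) (by linarith) (by linarith)
  have hpade₂ :=
    two_mul_one_sub_div_one_add_le_neg_log (y := (1 + 2 * a) / 2) (by linarith) (by linarith)
  have hlog_two : log 2 * ((1 + 2 * a) * (3 + 2 * a)) ≤ 2 + 8 * a := by
    have hlt : log 2 < 7 / 10 := log_two_lt_d9.trans (by norm_num)
    nlinarith [mul_le_mul_of_nonneg_right hlt.le (by positivity : 0 ≤ (1 + 2 * a) * (3 + 2 * a)),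
      mul_nonneg (by linarith : 0 ≤ a - 1 / 8) (by linarith : 0 ≤ 1 / 2 - a)]
  calc 0 ≤ (1 - 2 * a) * ((2 + 8 * a) / ((1 + 2 * a) * (3 + 2 * a)) - log 2) := by
        exact mul_nonneg (by linarith) (sub_nonneg.2 ((le_div_iff₀ (by positivity)).2 hlog_two))
    _ = (2 * a - 1) * log 2 + a * (2 * (1 - 2 * a) / (1 + 2 * a))
          + (1 - a) * (2 * (1 - (1 + 2 * a) / 2) / (1 + (1 + 2 * a) / 2)) := by
        field_simp
        ring
    _ ≤ phi a := by
        rw [hsplit]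
        gcongr (2 * a - 1) * log 2 + a * ?_ + (1 - a) * ?_
        linarith

theorem neg_log_one_add_two_mul_ineq (a : ℝ) (ha : a ∈ Set.Icc (0 : ℝ) (1/2)) :
    0 ≤ -(1 - a) * Real.log (1 + 2 * a) - a * Real.log a := by
  obtain ⟨ha₀, ha₁⟩ := ha
  rcases ha₀.eq_or_lt with rfl | ha₀
  · simp
  rcases le_total a (1 / 8) with ha | ha
  · exact phi_nonneg_of_le_one_eighth ha₀ ha
  · exact phi_nonneg_of_one_eighth_le ha ha₁
end

section
/- For every a ∈ (0, 1/2) and every γ ≥ 0: 1 - γ a log a/(1-a) ≥ (1/2 + a)^γ (1 + γ log 2), with strict inequality when γ > 0. -/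
/-!
Put `c = 1/2 + a` and `B = -a log a / (1 - a)`. The heart of the matter is `log (1 + 2a) ≤ B`,
which after the substitution `t = 1/a` reads `(t - 1) log (t + 2) ≤ t log t` for `t ≥ 2`: equality
holds at `t = 2`, and the derivative `log t - log (t + 2) + 3 / (t + 2)` is nonnegative by the
trapezoid bound `log y ≤ (y - y⁻¹) / 2`. Then `log 2 ≤ B - log c`, so
`1 + γ log 2 ≤ (1 - γ log c) (1 + γ B)`, and `c ^ γ (1 - γ log c) ≤ 1` is `1 + x ≤ exp x`
at `x = -γ log c`, strict for `γ > 0`.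
-/

open Set

theorem one_add_mul_le_one_add_mul_mul_one_add_mul {R : Type*} [CommRing R] [LinearOrder R]
    [IsStrictOrderedRing R] {γ K L B : R} (hγ : 0 ≤ γ) (hL : 0 ≤ L) (hB : 0 ≤ B)
    (hK : K ≤ L + B) : 1 + γ * K ≤ (1 + γ * L) * (1 + γ * B) := by
  nlinarith [mul_le_mul_of_nonneg_left hK hγ, mul_nonneg (mul_nonneg hγ hγ) (mul_nonneg hL hB)]

namespace Real

theorem log_le_sub_inv_div_two {y : ℝ} (hy : 1 ≤ y) : log y ≤ (y - y⁻¹) / 2 := by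
  rw [← sinh_log (by linarith)]
  exact self_le_sinh_iff.2 (log_nonneg hy)

theorem log_add_two_sub_log_le {t : ℝ} (ht : 2 ≤ t) : log (t + 2) - log t ≤ 3 / (t + 2) := by
  have ht0 : 0 < t := by linarith
  calc log (t + 2) - log t = log ((t + 2) / t) := (log_div (by linarith) ht0.ne').symm
    _ ≤ ((t + 2) / t - ((t + 2) / t)⁻¹) / 2 :=
        log_le_sub_inv_div_two ((one_le_div ht0).2 (by linarith))
    _ = 2 * (t + 1) / (t * (t + 2)) := by field_simp; ring
    _ ≤ 3 / (t + 2) := by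
        rw [div_le_div_iff₀ (by positivity) (by positivity)]
        nlinarith

theorem sub_one_mul_log_add_two_le_mul_log {t : ℝ} (ht : 2 ≤ t) :
    (t - 1) * log (t + 2) ≤ t * log t := by
  let φ : ℝ → ℝ := fun s ↦ s * log s - (s - 1) * log (s + 2)
  have hφ' : ∀ s ∈ Ici (2 : ℝ), HasDerivAt φ (log s - log (s + 2) + 3 / (s + 2)) s := by
    intro s hs
    have hs0 : s ≠ 0 := by linarith [mem_Ici.1 hs]
    have hs2 : s + 2 ≠ 0 := by linarith [mem_Ici.1 hs]
    refine ((hasDerivAt_mul_log hs0).sub (((hasDerivAt_id s).sub_const 1).mul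
      (((hasDerivAt_id s).add_const 2).log hs2))).congr_deriv ?_
    simp only [id]
    field_simp
    ring
  have hmono : MonotoneOn φ (Ici 2) := by
    refine monotoneOn_of_hasDerivWithinAt_nonneg (convex_Ici 2)
      (fun s hs ↦ (hφ' s hs).continuousAt.continuousWithinAt)
      (fun s hs ↦ (hφ' s (interior_subset hs)).hasDerivWithinAt) fun s hs ↦ ?_
    rw [interior_Ici] at hs
    linarith [log_add_two_sub_log_le (hs.le)]
  have hφ2 : φ 2 = 0 := by
    simp only [φ]
    rw [show (2 : ℝ) + 2 = 2 ^ 2 by norm_num, log_pow]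
    ring
  linarith [hmono (mem_Ici.2 le_rfl) (mem_Ici.2 ht) ht]

theorem one_sub_mul_log_one_add_two_mul_le {a : ℝ} (ha0 : 0 < a) (ha : a ≤ 1 / 2) :
    (1 - a) * log (1 + 2 * a) ≤ -(a * log a) := by
  have ht : 2 ≤ a⁻¹ := by rw [le_inv_comm₀ two_pos ha0]; linarith
  have h := mul_le_mul_of_nonneg_left (sub_one_mul_log_add_two_le_mul_log ht) ha0.le
  rw [show a⁻¹ + 2 = (1 + 2 * a) / a by field_simp, log_div (by linarith) ha0.ne', log_inv,
    ← mul_assoc, ← mul_assoc, show a * (a⁻¹ - 1) = 1 - a by field_simp,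
    mul_inv_cancel₀ ha0.ne'] at h
  linarith

theorem rpow_mul_one_sub_mul_log_le_one {c : ℝ} (hc : 0 < c) (γ : ℝ) :
    c ^ γ * (1 - γ * log c) ≤ 1 := by
  rw [rpow_def_of_pos hc, mul_comm (log c)]
  calc exp (γ * log c) * (1 - γ * log c) ≤ exp (γ * log c) * exp (-(γ * log c)) :=
        mul_le_mul_of_nonneg_left (one_sub_le_exp_neg _) (exp_pos _).le
    _ = 1 := by rw [← exp_add, add_neg_cancel, exp_zero]

theorem rpow_mul_one_sub_mul_log_lt_one {c γ : ℝ} (hc : 0 < c) (hc1 : c ≠ 1) (hγ : γ ≠ 0) :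
    c ^ γ * (1 - γ * log c) < 1 := by
  have hx : -(γ * log c) ≠ 0 := by
    simpa [hγ, hc.ne', hc1] using (log_ne_zero_of_pos_of_ne_one hc hc1)
  rw [rpow_def_of_pos hc, mul_comm (log c)]
  calc exp (γ * log c) * (1 - γ * log c) < exp (γ * log c) * exp (-(γ * log c)) := by
        gcongr
        linarith [add_one_lt_exp hx]
    _ = 1 := by rw [← exp_add, add_neg_cancel, exp_zero]

end Real

open Real

theorem s2_lower_bound (a : ℝ) (ha : a ∈ Set.Ioo (0 : ℝ) (1/2))
    (γ : ℝ) (hγ : 0 ≤ γ) :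
    (1/2 + a) ^ γ * (1 + γ * Real.log 2) ≤ 1 - γ * a * Real.log a / (1 - a) ∧
    (0 < γ → (1/2 + a) ^ γ * (1 + γ * Real.log 2) < 1 - γ * a * Real.log a / (1 - a)) := by
  obtain ⟨ha0, ha2⟩ := ha
  have hc : 0 < 1 / 2 + a := by positivity
  have hc1 : 1 / 2 + a < 1 := by linarith
  set c := 1 / 2 + a
  set B := -(a * log a) / (1 - a)
  have h1a : 0 < 1 - a := by linarith
  have hB : 0 ≤ B := div_nonneg (neg_nonneg.2 (mul_nonpos_of_nonneg_of_nonpos ha0.le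
    (log_nonpos ha0.le (by linarith)))) h1a.le
  have hlog2 : log 2 ≤ -log c + B := by
    have h := one_sub_mul_log_one_add_two_mul_le ha0 ha2.le
    rw [show 1 + 2 * a = 2 * c by ring, log_mul two_ne_zero hc.ne'] at h
    have : log 2 + log c ≤ B := (le_div_iff₀ h1a).2 (by linarith)
    linarith
  have hprod := one_add_mul_le_one_add_mul_mul_one_add_mul hγ
    (neg_nonneg.2 (log_nonpos hc.le hc1.le)) hB hlog2
  rw [mul_neg, ← sub_eq_add_neg] at hprod
  have hrhs : 1 - γ * a * log a / (1 - a) = 1 + γ * B := by ring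
  have hrhs_pos : 0 < 1 + γ * B := by positivity
  have hsplit : c ^ γ * (1 + γ * log 2) ≤ c ^ γ * (1 - γ * log c) * (1 + γ * B) := by
    rw [mul_assoc]; gcongr
  rw [hrhs]
  exact ⟨hsplit.trans (mul_le_of_le_one_left hrhs_pos.le (rpow_mul_one_sub_mul_log_le_one hc γ)),
    fun hγ0 ↦ hsplit.trans_lt (mul_lt_of_lt_one_left hrhs_pos
      (rpow_mul_one_sub_mul_log_lt_one hc hc1.ne hγ0.ne'))⟩
end

section
/- Fix γ > 0 and η ∈ (1/2, 1). Suppose q ∈ (1/2, 1) is a critical point of the binary pointwise focal risk W(q) = -η (1-q)^γ log q - (1-η) q^γ log(1-q), so that η = (q^γ/(1-q) - γ q^{γ-1} log(1-q)) / (q^γ/(1-q) - γ q^{γ-1} log(1-q) + (1-q)^γ/q - γ (1-q)^{γ-1} log q). Then q < η; that is, the focal-risk minimizer is strictly underconfident. -/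
open Real

/-!
Write `p = 1 - q < q` and `ψ(x) = (1 - x)^γ - γ x (1 - x)^(γ-1) log x` (`focalScore γ x`), which is
`-x φ'(x)` for the focal loss `φ(x) = -(1 - x)^γ log x`. The recovery formula says
`η / (1 - η) = (ψ(p) / p) / (ψ(q) / q)`, so `q < η` is the comparison `ψ(q) < ψ(p)`; multiplied by `pq` it
compares `pq p^γ - γ q² p^γ log q` with `pq q^γ - γ p² q^γ log p`.

For `γ ≥ 2` this holds term by term, since then `q² p^γ ≤ p² q^γ` and `log p < log q`.
For `γ ≤ 2` the weights compare the other way; the bounds `q log q ≥ q - 1` and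
`q (log q - log p) > q - p` reduce the claim to `q (q^γ - p^γ) + γ (p q^γ - q p^γ) ≥ 0`, that is to
`(1 + γ) r^γ ≤ 1 + γ r` for `r = p / q ∈ [0, 1]` (Bernoulli for `γ ≤ 1`, `r^γ ≤ r` for `γ ≥ 1`).
-/

theorem one_add_mul_rpow_le_one_add_mul {γ r : ℝ} (hγ : 0 ≤ γ) (hr₀ : 0 ≤ r) (hr₁ : r ≤ 1) :
    (1 + γ) * r ^ γ ≤ 1 + γ * r := by
  rcases le_total γ 1 with hγ₁ | hγ₁
  · have bernoulli : r ^ γ ≤ 1 + γ * (r - 1) := by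
      simpa using rpow_one_add_le_one_add_mul_self (s := r - 1) (by linarith) hγ hγ₁
    nlinarith [mul_le_mul_of_nonneg_left bernoulli (by linarith : (0 : ℝ) ≤ 1 + γ),
      mul_nonneg (mul_nonneg hγ hγ) (sub_nonneg.2 hr₁)]
  · nlinarith [rpow_le_self_of_le_one hr₀ hr₁ hγ₁]

theorem mul_sub_rpow_add_mul_sub_rpow_nonneg {γ p q : ℝ} (hγ : 0 ≤ γ) (hp : 0 ≤ p)
    (hpq : p ≤ q) : 0 ≤ q * (q ^ γ - p ^ γ) + γ * (p * q ^ γ - q * p ^ γ) := by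
  rcases hpq.eq_or_lt with rfl | hpq
  · simp
  have hq : 0 < q := hp.trans_lt hpq
  obtain ⟨r, hr₀, hr₁, rfl⟩ : ∃ r, 0 ≤ r ∧ r ≤ 1 ∧ p = r * q :=
    ⟨p / q, div_nonneg hp hq.le, (div_le_one hq).2 hpq.le, by field_simp⟩
  rw [mul_rpow hr₀ hq.le]
  nlinarith [mul_le_mul_of_nonneg_left (one_add_mul_rpow_le_one_add_mul hγ hr₀ hr₁)
    (by positivity : 0 ≤ q * q ^ γ)]

theorem rpow_mul_rpow_le_rpow_mul_rpow {p q s t : ℝ} (hp : 0 < p) (hpq : p ≤ q) (hst : s ≤ t) :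
    p ^ t * q ^ s ≤ p ^ s * q ^ t := by
  have hq : 0 < q := hp.trans_le hpq
  have h := rpow_le_rpow_of_exponent_ge (div_pos hp hq) ((div_le_one hq).2 hpq) hst
  rwa [div_rpow hp.le hq.le, div_rpow hp.le hq.le,
    div_le_div_iff₀ (by positivity) (by positivity)] at h

theorem sub_one_le_mul_log {x : ℝ} (hx : 0 < x) : x - 1 ≤ x * log x := by
  have h := mul_le_mul_of_nonneg_left (one_sub_inv_le_log_of_pos hx) hx.le
  rwa [mul_sub, mul_one, mul_inv_cancel₀ hx.ne'] at h

theorem sub_lt_mul_log_sub_log {p q : ℝ} (hp : 0 < p) (hpq : p < q) :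
    q - p < q * (log q - log p) := by
  have hq : 0 < q := hp.trans hpq
  have h := log_lt_sub_one_of_pos (div_pos hp hq) ((div_eq_one_iff_eq hq.ne').not.2 hpq.ne)
  rw [log_div hp.ne' hq.ne'] at h
  have := mul_lt_mul_of_pos_left h hq
  field_simp at this
  linarith

theorem mul_rpow_sub_mul_log_lt_of_add_eq_one {γ p q : ℝ} (hγ : 0 < γ) (hp : 0 < p) (hpq : p < q)
    (hsum : p + q = 1) :
    p * q * p ^ γ - γ * (q ^ 2 * p ^ γ) * log q
      < p * q * q ^ γ - γ * (p ^ 2 * q ^ γ) * log p := by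
  have hq : 0 < q := hp.trans hpq
  rcases le_total γ 2 with hγ₂ | hγ₂
  · have hweights : p ^ 2 * q ^ γ ≤ p ^ γ * q ^ 2 := by
      simpa only [rpow_two] using rpow_mul_rpow_le_rpow_mul_rpow hp hpq.le hγ₂
    have hlog_lower : -p ≤ q * log q := by linarith [sub_one_le_mul_log hq]
    nlinarith [mul_lt_mul_of_pos_left (sub_lt_mul_log_sub_log hp hpq)
        (by positivity : 0 < γ * (p ^ 2 * q ^ γ)),
      mul_le_mul_of_nonneg_left (mul_le_mul_of_nonneg_right hlog_lower (sub_nonneg.2 hweights))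
        hγ.le,
      mul_nonneg (mul_nonneg hp.le hq.le) (mul_sub_rpow_add_mul_sub_rpow_nonneg hγ.le hp.le hpq.le)]
  · have hweights : p ^ γ * q ^ 2 ≤ p ^ 2 * q ^ γ := by
      simpa only [rpow_two] using rpow_mul_rpow_le_rpow_mul_rpow hp hpq.le hγ₂
    have hlogq : log q < 0 := log_neg hq (by linarith)
    nlinarith [mul_le_mul_of_nonneg_left hweights hγ.le,
      mul_pos (mul_pos hp hq) (sub_pos.2 (rpow_lt_rpow hp.le hpq hγ)),
      mul_le_mul_of_nonneg_left (log_lt_log hp hpq).le (by positivity : 0 ≤ γ * (p ^ 2 * q ^ γ))]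

noncomputable def focalScore (γ x : ℝ) : ℝ :=
  (1 - x) ^ γ - γ * x * (1 - x) ^ (γ - 1) * log x

theorem focalScore_pos {γ x : ℝ} (hγ : 0 ≤ γ) (hx₀ : 0 < x) (hx₁ : x < 1) :
    0 < focalScore γ x := by
  have hy : 0 < 1 - x := by linarith
  have hweight : 0 ≤ γ * x * (1 - x) ^ (γ - 1) := by positivity
  unfold focalScore
  nlinarith [log_neg hx₀ hx₁, rpow_pos_of_pos hy γ]

theorem focalScore_lt_focalScore_one_sub {γ q : ℝ} (hγ : 0 < γ) (hq : q ∈ Set.Ioo (1/2 : ℝ) 1) :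
    focalScore γ q < focalScore γ (1 - q) := by
  obtain ⟨hq₀, hq₁⟩ := hq
  have hp : 0 < 1 - q := by linarith
  have hq : 0 < q := by linarith
  have key := mul_rpow_sub_mul_log_lt_of_add_eq_one hγ hp (by linarith) (sub_add_cancel 1 q)
  refine lt_of_mul_lt_mul_left ?_ (mul_pos hp hq).le
  simp only [focalScore, sub_sub_cancel, rpow_sub_one hp.ne', rpow_sub_one hq.ne']
  field_simp
  linarith

theorem binary_focal_minimizer_underconfident_general (γ : ℝ) (hγ : 0 < γ)
    (η q : ℝ) (hq : q ∈ Set.Ioo (1/2 : ℝ) 1)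
    (hrecover : η =
      (q ^ γ / (1 - q) - γ * q ^ (γ - 1) * Real.log (1 - q)) /
        (q ^ γ / (1 - q) - γ * q ^ (γ - 1) * Real.log (1 - q)
          + (1 - q) ^ γ / q - γ * (1 - q) ^ (γ - 1) * Real.log q)) :
    q < η := by
  obtain ⟨hq₀, hq₁⟩ := hq
  have hp : 0 < 1 - q := by linarith
  have hq : 0 < q := by linarith
  rw [hrecover, add_sub_assoc]
  set A := q ^ γ / (1 - q) - γ * q ^ (γ - 1) * Real.log (1 - q)
  set B := (1 - q) ^ γ / q - γ * (1 - q) ^ (γ - 1) * Real.log q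
  have hpA : (1 - q) * A = focalScore γ (1 - q) := by
    simp only [A, focalScore, sub_sub_cancel]
    field_simp
  have hqB : q * B = focalScore γ q := by
    simp only [B, focalScore]
    field_simp
  have hA : 0 < A :=
    pos_of_mul_pos_right (hpA ▸ focalScore_pos hγ.le hp (by linarith)) hp.le
  have hB : 0 < B := pos_of_mul_pos_right (hqB ▸ focalScore_pos hγ.le hq hq₁) hq.le
  rw [lt_div_iff₀ (by linarith)]
  linarith [focalScore_lt_focalScore_one_sub hγ ⟨hq₀, hq₁⟩]

theorem binary_focal_minimizer_underconfident (γ : ℝ) (hγ : 0 < γ)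
    (η q : ℝ) (hη : η ∈ Set.Ioo (1/2 : ℝ) 1) (hq : q ∈ Set.Ioo (1/2 : ℝ) 1)
    (hrecover : η =
      (q ^ γ / (1 - q) - γ * q ^ (γ - 1) * Real.log (1 - q)) /
        (q ^ γ / (1 - q) - γ * q ^ (γ - 1) * Real.log (1 - q)
          + (1 - q) ^ γ / q - γ * (1 - q) ^ (γ - 1) * Real.log q)) :
    q < η :=
  binary_focal_minimizer_underconfident_general γ hγ η q hq hrecover
end
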